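/- In QHC, ⊢ ?(α ∨ β) ↔ ?α ∨ ?β, i.e., ? distributes over disjunction in both directions; this is derivable from the core axioms of QHC. -/

import Mathlib

/- Problem (intuitionistic) formulas and proposition (classical) formulas of QHC. -/
mutual
inductive PF : Type
  | var : Nat → PF
  | bot : PF
  | and : PF → PF → PF
  | or : PF → PF → PF
  | imp : PF → PF → PF
  | bang : CF → PF
inductive CF : Type
  | var : Nat → CF
  | fls : CF
  | and : CF → CF → CF
  | or : CF → CF → CF
  | imp : CF → CF → CF
  | quest : PF → CF
end

def PF.neg (α : PF) : PF := α.imp PF.bot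
def CF.neg (p : CF) : CF := p.imp CF.fls
def PF.iff (α β : PF) : PF := (α.imp β).and (β.imp α)
def CF.iff (p q : CF) : CF := (p.imp q).and (q.imp p)
def CF.box (p : CF) : CF := CF.quest (PF.bang p)
def PF.nabla (α : PF) : PF := PF.bang (CF.quest α)

/- Derivability in QHC, parameterized by a set `Ax` of extra problem axioms
(used to treat the axiom ¬!0 and its variants uniformly). Intuitionistic logic
on problems, classical logic on propositions, the rules α ⊢ ?α and p ⊢ !p, and
the mixed axioms ?!p → p, α → !?α, !(p→q) → (!p → !q), ?(α→β) → (?α → ?β). -/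
mutual
inductive ProvP (Ax : PF → Prop) : PF → Prop
  | axm {α} : Ax α → ProvP Ax α
  | mp {α β} : ProvP Ax (α.imp β) → ProvP Ax α → ProvP Ax β
  | ak (α β : PF) : ProvP Ax (α.imp (β.imp α))
  | as (α β γ : PF) : ProvP Ax ((α.imp (β.imp γ)).imp ((α.imp β).imp (α.imp γ)))
  | andI (α β : PF) : ProvP Ax (α.imp (β.imp (α.and β)))
  | andE1 (α β : PF) : ProvP Ax ((α.and β).imp α)
  | andE2 (α β : PF) : ProvP Ax ((α.and β).imp β)
  | orI1 (α β : PF) : ProvP Ax (α.imp (α.or β))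
  | orI2 (α β : PF) : ProvP Ax (β.imp (α.or β))
  | orE (α β γ : PF) : ProvP Ax ((α.imp γ).imp ((β.imp γ).imp ((α.or β).imp γ)))
  | exf (α : PF) : ProvP Ax (PF.bot.imp α)
  | bangIntro {p} : ProvC Ax p → ProvP Ax (PF.bang p)
  | bangImp (p q : CF) : ProvP Ax ((PF.bang (p.imp q)).imp ((PF.bang p).imp (PF.bang q)))
  | bangQuest (α : PF) : ProvP Ax (α.imp (PF.bang (CF.quest α)))
inductive ProvC (Ax : PF → Prop) : CF → Prop
  | mp {p q} : ProvC Ax (p.imp q) → ProvC Ax p → ProvC Ax q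
  | ak (p q : CF) : ProvC Ax (p.imp (q.imp p))
  | as (p q r : CF) : ProvC Ax ((p.imp (q.imp r)).imp ((p.imp q).imp (p.imp r)))
  | andI (p q : CF) : ProvC Ax (p.imp (q.imp (p.and q)))
  | andE1 (p q : CF) : ProvC Ax ((p.and q).imp p)
  | andE2 (p q : CF) : ProvC Ax ((p.and q).imp q)
  | orI1 (p q : CF) : ProvC Ax (p.imp (p.or q))
  | orI2 (p q : CF) : ProvC Ax (q.imp (p.or q))
  | orE (p q r : CF) : ProvC Ax ((p.imp r).imp ((q.imp r).imp ((p.or q).imp r)))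
  | exf (p : CF) : ProvC Ax (CF.fls.imp p)
  | lem (p : CF) : ProvC Ax (p.or (p.imp CF.fls))
  | questIntro {α} : ProvP Ax α → ProvC Ax (CF.quest α)
  | questImp (α β : PF) : ProvC Ax ((CF.quest (α.imp β)).imp ((CF.quest α).imp (CF.quest β)))
  | questBang (p : CF) : ProvC Ax ((CF.quest (PF.bang p)).imp p)
end

/-- The axiom (!⊥): ¬!0. -/
def QHCAx : PF → Prop := fun α => α = (PF.bang CF.fls).imp PF.bot

/-- Derivability of a problem in QHC. -/
def PrvP (α : PF) : Prop := ProvP QHCAx α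
/-- Derivability of a proposition in QHC. -/
def PrvC (p : CF) : Prop := ProvC QHCAx p


/- `?` is left adjoint to `!`: `?α → p` is derivable iff `α → !p` is, using `α → !?α` in one
direction and `?!p → p` in the other. A left adjoint preserves joins, which gives
`?(α ∨ β) → ?α ∨ ?β`; the converse is monotonicity of `?` applied to the two injections. -/

section Derivations

variable {Ax : PF → Prop}

namespace ProvP

theorem imp_trans {α β γ : PF} (hαβ : ProvP Ax (α.imp β)) (hβγ : ProvP Ax (β.imp γ)) :
    ProvP Ax (α.imp γ) :=
  mp (mp (as α β γ) (mp (ak (β.imp γ) α) hβγ)) hαβ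

theorem or_elim {α β γ : PF} (hα : ProvP Ax (α.imp γ)) (hβ : ProvP Ax (β.imp γ)) :
    ProvP Ax ((α.or β).imp γ) :=
  mp (mp (orE α β γ) hα) hβ

theorem bang_mono {p q : CF} (h : ProvC Ax (p.imp q)) :
    ProvP Ax ((PF.bang p).imp (PF.bang q)) :=
  mp (bangImp p q) (bangIntro h)

theorem imp_bang_of_quest_imp {α : PF} {p : CF} (h : ProvC Ax ((CF.quest α).imp p)) :
    ProvP Ax (α.imp (PF.bang p)) :=
  imp_trans (bangQuest α) (bang_mono h)

end ProvP

namespace ProvC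

theorem imp_trans {p q r : CF} (hpq : ProvC Ax (p.imp q)) (hqr : ProvC Ax (q.imp r)) :
    ProvC Ax (p.imp r) :=
  mp (mp (as p q r) (mp (ak (q.imp r) p) hqr)) hpq

theorem or_elim {p q r : CF} (hp : ProvC Ax (p.imp r)) (hq : ProvC Ax (q.imp r)) :
    ProvC Ax ((p.or q).imp r) :=
  mp (mp (orE p q r) hp) hq

theorem iff_intro {p q : CF} (hpq : ProvC Ax (p.imp q)) (hqp : ProvC Ax (q.imp p)) :
    ProvC Ax (p.iff q) :=
  mp (mp (andI _ _) hpq) hqp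

theorem quest_mono {α β : PF} (h : ProvP Ax (α.imp β)) :
    ProvC Ax ((CF.quest α).imp (CF.quest β)) :=
  mp (questImp α β) (questIntro h)

theorem quest_imp_of_imp_bang {α : PF} {p : CF} (h : ProvP Ax (α.imp (PF.bang p))) :
    ProvC Ax ((CF.quest α).imp p) :=
  imp_trans (quest_mono h) (questBang p)

end ProvC

end Derivations

theorem qhc_quest_or (α β : PF) :
    PrvC (CF.iff (CF.quest (α.or β)) ((CF.quest α).or (CF.quest β))) := by
  have forward : PrvC ((CF.quest (α.or β)).imp ((CF.quest α).or (CF.quest β))) :=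
    ProvC.quest_imp_of_imp_bang <| ProvP.or_elim
      (ProvP.imp_bang_of_quest_imp (ProvC.orI1 _ _))
      (ProvP.imp_bang_of_quest_imp (ProvC.orI2 _ _))
  have backward : PrvC (((CF.quest α).or (CF.quest β)).imp (CF.quest (α.or β))) :=
    ProvC.or_elim (ProvC.quest_mono (ProvP.orI1 α β)) (ProvC.quest_mono (ProvP.orI2 α β))
  exact ProvC.iff_intro forward backward
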